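/- For d ≥ 1, let Ψ₀ and Ψ₁ be the super-operators from d×d matrices to (d+1)×(d+1) matrices defined by: Ψ₀[X] has (Tr(X)·I_d + Xᵀ)/(d+1) as its top-left d×d block and zeros elsewhere; Ψ₁[X] has (Tr(X)·I_d − Xᵀ)/(d+1) as its top-left d×d block, 2·Tr(X)/(d+1) in the bottom-right corner entry, and zeros elsewhere. Then for every n ≥ 1 and every bipartite state ρ on ℂ^d ⊗ ℂ^n, ‖((Ψ₀ − Ψ₁) ⊗ id_n)[ρ]‖_tr = (2/(d+1)) · (1 + ‖ρ^{T_A}‖_tr), where ρ^{T_A} denotes the partial transpose of ρ on the first factor. Consequently, ‖((Ψ₀ − Ψ₁) ⊗ id_n)[ρ]‖_tr − 4/(d+1) = (4/(d+1)) · N_T(ρ), where N_T(ρ) = (‖ρ^{T_A}‖_tr − 1)/2 is the negativity of ρ. -/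

import Mathlib

open scoped Kronecker ComplexOrder Matrix

namespace ChannelDiscrimination

/-- The trace norm `Tr √(Aᴴ A)` of a complex square matrix. -/
noncomputable def traceNorm {ι : Type*} [Fintype ι] [DecidableEq ι]
    (A : Matrix ι ι ℂ) : ℝ :=
  (((Matrix.posSemidef_conjTranspose_mul_self A).1.eigenvectorUnitary : Matrix ι ι ℂ) *
      Matrix.diagonal (fun i => ((Real.sqrt
        ((Matrix.posSemidef_conjTranspose_mul_self A).1.eigenvalues i) : ℝ) : ℂ)) *
      (star ((Matrix.posSemidef_conjTranspose_mul_self A).1.eigenvectorUnitary : Matrix ι ι ℂ)) :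
      Matrix ι ι ℂ).trace.re

/-- A state: a positive semidefinite matrix of trace one. -/
def IsState {ι : Type*} [Fintype ι] (ρ : Matrix ι ι ℂ) : Prop :=
  ρ.PosSemidef ∧ ρ.trace = 1

/-- Separability of a bipartite matrix on `ℂ^m ⊗ ℂ^n`. -/
def IsSeparable {m n : ℕ} (σ : Matrix (Fin m × Fin n) (Fin m × Fin n) ℂ) : Prop :=
  ∃ (N : ℕ) (p : Fin N → ℝ) (ρ : Fin N → Matrix (Fin m) (Fin m) ℂ)
    (τ : Fin N → Matrix (Fin n) (Fin n) ℂ),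
    (∀ i, 0 ≤ p i) ∧ (∑ i, p i = 1) ∧ (∀ i, IsState (ρ i)) ∧ (∀ i, IsState (τ i)) ∧
    σ = ∑ i, (p i : ℂ) • (ρ i ⊗ₖ τ i)

/-- `Φ ⊗ id_n` for a super-operator `Φ` from `m×m` to `k×k` matrices. -/
def tensorId {m k : ℕ} (n : ℕ)
    (Φ : Matrix (Fin m) (Fin m) ℂ →ₗ[ℂ] Matrix (Fin k) (Fin k) ℂ) :
    Matrix (Fin m × Fin n) (Fin m × Fin n) ℂ →ₗ[ℂ]
      Matrix (Fin k × Fin n) (Fin k × Fin n) ℂ where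
  toFun M := Matrix.of fun p q => Φ (Matrix.of fun i j => M (i, p.2) (j, q.2)) p.1 q.1
  map_add' M N := by
    ext p q
    show Φ ((Matrix.of fun i j => M (i, p.2) (j, q.2)) +
        (Matrix.of fun i j => N (i, p.2) (j, q.2))) p.1 q.1 = _
    rw [map_add]
    rfl
  map_smul' c M := by
    ext p q
    show Φ (c • (Matrix.of fun i j => M (i, p.2) (j, q.2))) p.1 q.1 = _
    rw [map_smul]
    rfl

/-- A positive super-operator. -/
def IsPositiveMap {m k : ℕ}
    (Φ : Matrix (Fin m) (Fin m) ℂ →ₗ[ℂ] Matrix (Fin k) (Fin k) ℂ) : Prop :=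
  ∀ X : Matrix (Fin m) (Fin m) ℂ, X.PosSemidef → (Φ X).PosSemidef

/-- A trace-preserving super-operator. -/
def IsTracePreserving {m k : ℕ}
    (Φ : Matrix (Fin m) (Fin m) ℂ →ₗ[ℂ] Matrix (Fin k) (Fin k) ℂ) : Prop :=
  ∀ X : Matrix (Fin m) (Fin m) ℂ, (Φ X).trace = X.trace

/-- A completely positive super-operator: `Φ ⊗ id_n` is positive for every `n`. -/
def IsCompletelyPositive {m k : ℕ}
    (Φ : Matrix (Fin m) (Fin m) ℂ →ₗ[ℂ] Matrix (Fin k) (Fin k) ℂ) : Prop :=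
  ∀ (n : ℕ) (M : Matrix (Fin m × Fin n) (Fin m × Fin n) ℂ),
    M.PosSemidef → (tensorId n Φ M).PosSemidef

/-- A (quantum) channel: completely positive and trace-preserving. -/
def IsChannel {m k : ℕ}
    (Φ : Matrix (Fin m) (Fin m) ℂ →ₗ[ℂ] Matrix (Fin k) (Fin k) ℂ) : Prop :=
  IsCompletelyPositive Φ ∧ IsTracePreserving Φ

/-- An entanglement-breaking channel. -/
def IsEntanglementBreaking {m k : ℕ}
    (Φ : Matrix (Fin m) (Fin m) ℂ →ₗ[ℂ] Matrix (Fin k) (Fin k) ℂ) : Prop :=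
  IsChannel Φ ∧ ∀ (n : ℕ) (ρ : Matrix (Fin m × Fin n) (Fin m × Fin n) ℂ),
    IsState ρ → IsSeparable (tensorId n Φ ρ)

/-- `pad1 M c` is the `(k+1)×(k+1)` matrix with `M` as its top-left `k×k` block,
`c` in the bottom-right corner, and zeros elsewhere. -/
def pad1 {k : ℕ} (M : Matrix (Fin k) (Fin k) ℂ) (c : ℂ) :
    Matrix (Fin (k + 1)) (Fin (k + 1)) ℂ :=
  Matrix.of fun a b =>
    Fin.lastCases (Fin.lastCases c (fun _ => 0) b)
      (fun i => Fin.lastCases 0 (fun j => M i j) b) a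

/-- Partial transpose on the first tensor factor. -/
def ptransposeFst {d n : ℕ} (ρ : Matrix (Fin d × Fin n) (Fin d × Fin n) ℂ) :
    Matrix (Fin d × Fin n) (Fin d × Fin n) ℂ :=
  Matrix.of fun p q => ρ (q.1, p.2) (p.1, q.2)

/-! The difference of the two channels is `(Ψ₀ - Ψ₁)[X] = (2/(d+1)) (Xᵀ ⊕ (-Tr X))`. Hence, after
splitting `ℂ^(d+1) ⊗ ℂ^n` as `(ℂ^d ⊗ ℂ^n) ⊕ ℂ^n`, the matrix `((Ψ₀ - Ψ₁) ⊗ id_n)[ρ]` is block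
diagonal with blocks `(2/(d+1)) ρ^{T_A}` and `-(2/(d+1)) Tr_A ρ`. The trace norm is additive on
block-diagonal matrices, absolutely homogeneous and invariant under reindexing, and `Tr_A ρ` is a
state, so its trace norm is `1`. The trace norm is handled through `‖A‖_tr = Tr √(Aᴴ A)`: whenever
`Aᴴ A = S * S` with `S ⪰ 0`, uniqueness of the positive square root gives `‖A‖_tr = Tr S`. -/

section TraceNorm

open scoped MatrixOrder

variable {ι κ : Type*} [Fintype ι] [DecidableEq ι] [Fintype κ] [DecidableEq κ]

lemma traceNorm_eq_trace_sqrt (A : Matrix ι ι ℂ) :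
    traceNorm A = (CFC.sqrt (Aᴴ * A)).trace.re := by
  have hA := Matrix.posSemidef_conjTranspose_mul_self A
  rw [traceNorm, CFC.sqrt_eq_cfc, cfc_nnreal_eq_real _ (Aᴴ * A), hA.1.cfc_eq,
    Matrix.IsHermitian.cfc, Unitary.conjStarAlgAut_apply]
  congr 5
  funext i
  simp [max_eq_left (hA.eigenvalues_nonneg i)]

lemma traceNorm_eq_of_conjTranspose_mul_self_eq {A S : Matrix ι ι ℂ} (hS : S.PosSemidef)
    (h : Aᴴ * A = S * S) : traceNorm A = S.trace.re := by
  rw [traceNorm_eq_trace_sqrt, h, CFC.sqrt_mul_self S hS.nonneg]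

lemma posSemidef_sqrt (A : Matrix ι ι ℂ) : (CFC.sqrt A).PosSemidef :=
  Matrix.nonneg_iff_posSemidef.mp (CFC.sqrt_nonneg A)

lemma sqrt_mul_sqrt_conjTranspose_mul_self (A : Matrix ι ι ℂ) :
    CFC.sqrt (Aᴴ * A) * CFC.sqrt (Aᴴ * A) = Aᴴ * A :=
  CFC.sqrt_mul_sqrt_self _ (Matrix.posSemidef_conjTranspose_mul_self A).nonneg

lemma traceNorm_congr {A B : Matrix ι ι ℂ} (h : Aᴴ * A = Bᴴ * B) :
    traceNorm A = traceNorm B := by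
  rw [traceNorm_eq_trace_sqrt, traceNorm_eq_trace_sqrt, h]

lemma traceNorm_of_posSemidef {A : Matrix ι ι ℂ} (hA : A.PosSemidef) :
    traceNorm A = A.trace.re :=
  traceNorm_eq_of_conjTranspose_mul_self_eq hA (by rw [hA.isHermitian.eq])

lemma traceNorm_real_smul {c : ℝ} (hc : 0 ≤ c) (A : Matrix ι ι ℂ) :
    traceNorm (c • A) = c * traceNorm A := by
  rw [traceNorm_eq_trace_sqrt A, traceNorm_eq_of_conjTranspose_mul_self_eq
    ((posSemidef_sqrt _).smul hc) (S := c • CFC.sqrt (Aᴴ * A))]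
  · simp
  · simp [Matrix.conjTranspose_smul, smul_smul, sqrt_mul_sqrt_conjTranspose_mul_self]

lemma traceNorm_smul (a : ℂ) (A : Matrix ι ι ℂ) : traceNorm (a • A) = ‖a‖ * traceNorm A := by
  rw [← traceNorm_real_smul (norm_nonneg a)]
  refine traceNorm_congr ?_
  simp only [Matrix.conjTranspose_smul, Matrix.smul_mul, Matrix.mul_smul, smul_smul,
    ← Complex.coe_smul]
  congr 1
  rw [Complex.star_def, Complex.mul_conj, Complex.conj_ofReal,
    Complex.normSq_eq_norm_sq]
  push_cast
  ring

lemma traceNorm_reindex (e : ι ≃ κ) (A : Matrix ι ι ℂ) :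
    traceNorm (Matrix.reindex e e A) = traceNorm A := by
  rw [traceNorm_eq_trace_sqrt A, traceNorm_eq_of_conjTranspose_mul_self_eq
    ((posSemidef_sqrt _).submatrix _) (S := Matrix.reindex e e (CFC.sqrt (Aᴴ * A)))]
  · simp only [Matrix.trace, Matrix.diag, Matrix.reindex_apply, Matrix.submatrix_apply]
    rw [e.symm.sum_comp (fun i => CFC.sqrt (Aᴴ * A) i i)]
  · simp only [Matrix.reindex_apply, Matrix.conjTranspose_submatrix, Matrix.submatrix_mul_equiv,
      sqrt_mul_sqrt_conjTranspose_mul_self]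

lemma posSemidef_fromBlocks_zero {A : Matrix ι ι ℂ} {B : Matrix κ κ ℂ}
    (hA : A.PosSemidef) (hB : B.PosSemidef) : (Matrix.fromBlocks A 0 0 B).PosSemidef := by
  have : Matrix.fromBlocks A 0 0 B = (Matrix.fromBlocks (CFC.sqrt A) 0 0 (CFC.sqrt B))ᴴ *
      Matrix.fromBlocks (CFC.sqrt A) 0 0 (CFC.sqrt B) := by
    simp [Matrix.fromBlocks_conjTranspose, Matrix.fromBlocks_multiply,
      (posSemidef_sqrt A).isHermitian.eq, (posSemidef_sqrt B).isHermitian.eq,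
      CFC.sqrt_mul_sqrt_self A hA.nonneg, CFC.sqrt_mul_sqrt_self B hB.nonneg]
  rw [this]
  exact Matrix.posSemidef_conjTranspose_mul_self _

lemma traceNorm_fromBlocks_zero (A : Matrix ι ι ℂ) (B : Matrix κ κ ℂ) :
    traceNorm (Matrix.fromBlocks A 0 0 B) = traceNorm A + traceNorm B := by
  rw [traceNorm_eq_trace_sqrt A, traceNorm_eq_trace_sqrt B,
    traceNorm_eq_of_conjTranspose_mul_self_eq
      (posSemidef_fromBlocks_zero (posSemidef_sqrt _) (posSemidef_sqrt _))
      (S := Matrix.fromBlocks (CFC.sqrt (Aᴴ * A)) 0 0 (CFC.sqrt (Bᴴ * B)))]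
  · simp [Matrix.trace, Fintype.sum_sum_type]
  · simp [Matrix.fromBlocks_conjTranspose, Matrix.fromBlocks_multiply,
      sqrt_mul_sqrt_conjTranspose_mul_self]

end TraceNorm

section PartialTrace

variable {ι κ R : Type*} [Fintype ι]

def ptraceFst [AddCommMonoid R] (ρ : Matrix (ι × κ) (ι × κ) R) : Matrix κ κ R :=
  ∑ i, ρ.submatrix (i, ·) (i, ·)

lemma trace_ptraceFst [Fintype κ] [AddCommMonoid R] (ρ : Matrix (ι × κ) (ι × κ) R) :
    (ptraceFst ρ).trace = ρ.trace := by
  rw [ptraceFst, Matrix.trace_sum, Matrix.trace, Fintype.sum_prod_type]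
  rfl

lemma posSemidef_ptraceFst [CommRing R] [PartialOrder R] [StarRing R] [AddLeftMono R]
    {ρ : Matrix (ι × κ) (ι × κ) R} (hρ : ρ.PosSemidef) : (ptraceFst ρ).PosSemidef :=
  Matrix.posSemidef_sum _ fun _ _ => hρ.submatrix _

end PartialTrace

section Blocks

variable {k : ℕ}

@[simp] lemma pad1_castSucc_castSucc (M : Matrix (Fin k) (Fin k) ℂ) (c : ℂ) (i j : Fin k) :
    pad1 M c i.castSucc j.castSucc = M i j := by
  simp [pad1]

@[simp] lemma pad1_castSucc_last (M : Matrix (Fin k) (Fin k) ℂ) (c : ℂ) (i : Fin k) :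
    pad1 M c i.castSucc (Fin.last k) = 0 := by
  simp [pad1]

@[simp] lemma pad1_last_castSucc (M : Matrix (Fin k) (Fin k) ℂ) (c : ℂ) (j : Fin k) :
    pad1 M c (Fin.last k) j.castSucc = 0 := by
  simp [pad1]

@[simp] lemma pad1_last_last (M : Matrix (Fin k) (Fin k) ℂ) (c : ℂ) :
    pad1 M c (Fin.last k) (Fin.last k) = c := by
  simp [pad1]

lemma pad1_sub (M N : Matrix (Fin k) (Fin k) ℂ) (a b : ℂ) :
    pad1 M a - pad1 N b = pad1 (M - N) (a - b) := by
  ext x y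
  induction x using Fin.lastCases <;> induction y using Fin.lastCases <;> simp

def finSuccProdEquiv (d : ℕ) (κ : Type*) : (Fin d × κ) ⊕ κ ≃ Fin (d + 1) × κ where
  toFun := Sum.elim (fun ip => (ip.1.castSucc, ip.2)) (fun p => (Fin.last d, p))
  invFun ap := Fin.lastCases (Sum.inr ap.2) (fun i => Sum.inl (i, ap.2)) ap.1
  left_inv := by rintro (⟨i, p⟩ | p) <;> simp
  right_inv := by
    rintro ⟨a, p⟩
    induction a using Fin.lastCases <;> simp

@[simp] lemma finSuccProdEquiv_symm_castSucc {d : ℕ} {κ : Type*} (i : Fin d) (p : κ) :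
    (finSuccProdEquiv d κ).symm (i.castSucc, p) = Sum.inl (i, p) := by
  simp [finSuccProdEquiv, Equiv.symm]

@[simp] lemma finSuccProdEquiv_symm_last {d : ℕ} {κ : Type*} (p : κ) :
    (finSuccProdEquiv d κ).symm (Fin.last d, p) = Sum.inr p := by
  simp [finSuccProdEquiv, Equiv.symm]

end Blocks

lemma tensorId_apply {m k n : ℕ} (Φ : Matrix (Fin m) (Fin m) ℂ →ₗ[ℂ] Matrix (Fin k) (Fin k) ℂ)
    (M : Matrix (Fin m × Fin n) (Fin m × Fin n) ℂ) (p q : Fin k × Fin n) :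
    tensorId n Φ M p q = Φ (Matrix.of fun i j => M (i, p.2) (j, q.2)) p.1 q.1 := rfl

lemma tensorId_eq_reindex_fromBlocks {d n : ℕ}
    {Φ : Matrix (Fin d) (Fin d) ℂ →ₗ[ℂ] Matrix (Fin (d + 1)) (Fin (d + 1)) ℂ} {a b : ℂ}
    (hΦ : ∀ X, Φ X = pad1 (a • Xᵀ) (b * X.trace))
    (ρ : Matrix (Fin d × Fin n) (Fin d × Fin n) ℂ) :
    tensorId n Φ ρ = Matrix.reindex (finSuccProdEquiv d (Fin n)) (finSuccProdEquiv d (Fin n))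
      (Matrix.fromBlocks (a • ptransposeFst ρ) 0 0 (b • ptraceFst ρ)) := by
  ext ⟨x, p⟩ ⟨y, q⟩
  induction x using Fin.lastCases <;> induction y using Fin.lastCases <;>
    simp [tensorId_apply, hΦ, ptransposeFst, ptraceFst, Matrix.trace, Matrix.sum_apply,
      Finset.mul_sum]

lemma transposition_sub_eq_pad1 {d : ℕ}
    {Ψ₀ Ψ₁ : Matrix (Fin d) (Fin d) ℂ →ₗ[ℂ] Matrix (Fin (d + 1)) (Fin (d + 1)) ℂ}
    (hΨ₀ : ∀ X : Matrix (Fin d) (Fin d) ℂ,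
      Ψ₀ X = pad1 (((d : ℂ) + 1)⁻¹ • (X.trace • (1 : Matrix (Fin d) (Fin d) ℂ) + Xᵀ)) 0)
    (hΨ₁ : ∀ X : Matrix (Fin d) (Fin d) ℂ,
      Ψ₁ X = pad1 (((d : ℂ) + 1)⁻¹ • (X.trace • (1 : Matrix (Fin d) (Fin d) ℂ) - Xᵀ))
        (2 * X.trace / ((d : ℂ) + 1)))
    (X : Matrix (Fin d) (Fin d) ℂ) :
    (Ψ₀ - Ψ₁) X = pad1 (((2 / ((d : ℝ) + 1) : ℝ) : ℂ) • Xᵀ)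
      (-((2 / ((d : ℝ) + 1) : ℝ) : ℂ) * X.trace) := by
  rw [LinearMap.sub_apply, hΨ₀, hΨ₁, pad1_sub]
  push_cast
  congr 1
  · module
  · ring

theorem transposition_channels_advantage_eq_negativity_general
    {d : ℕ}
    (Ψ₀ Ψ₁ : Matrix (Fin d) (Fin d) ℂ →ₗ[ℂ] Matrix (Fin (d + 1)) (Fin (d + 1)) ℂ)
    (hΨ₀ : ∀ X : Matrix (Fin d) (Fin d) ℂ,
      Ψ₀ X = pad1 (((d : ℂ) + 1)⁻¹ • (X.trace • (1 : Matrix (Fin d) (Fin d) ℂ) + Xᵀ)) 0)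
    (hΨ₁ : ∀ X : Matrix (Fin d) (Fin d) ℂ,
      Ψ₁ X = pad1 (((d : ℂ) + 1)⁻¹ • (X.trace • (1 : Matrix (Fin d) (Fin d) ℂ) - Xᵀ))
        (2 * X.trace / ((d : ℂ) + 1))) :
    ∀ n : ℕ, 1 ≤ n → ∀ ρ : Matrix (Fin d × Fin n) (Fin d × Fin n) ℂ, IsState ρ →
      traceNorm (tensorId n (Ψ₀ - Ψ₁) ρ) =
        (2 / ((d : ℝ) + 1)) * (1 + traceNorm (ptransposeFst ρ)) ∧
      traceNorm (tensorId n (Ψ₀ - Ψ₁) ρ) - 4 / ((d : ℝ) + 1) =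
        (4 / ((d : ℝ) + 1)) * ((traceNorm (ptransposeFst ρ) - 1) / 2) := by
  intro n _ ρ hρ
  have hc : 0 ≤ 2 / ((d : ℝ) + 1) := by positivity
  have h_ptrace : traceNorm (ptraceFst ρ) = 1 := by
    rw [traceNorm_of_posSemidef (posSemidef_ptraceFst hρ.1), trace_ptraceFst, hρ.2,
      Complex.one_re]
  have h_norm : traceNorm (tensorId n (Ψ₀ - Ψ₁) ρ) =
      (2 / ((d : ℝ) + 1)) * (1 + traceNorm (ptransposeFst ρ)) := by
    rw [tensorId_eq_reindex_fromBlocks (transposition_sub_eq_pad1 hΨ₀ hΨ₁), traceNorm_reindex,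
      traceNorm_fromBlocks_zero, traceNorm_smul, traceNorm_smul, norm_neg,
      Complex.norm_of_nonneg hc, h_ptrace]
    ring
  refine ⟨h_norm, ?_⟩
  rw [h_norm]
  ring

/-- For the transposition channels `Ψ₀, Ψ₁`, every bipartite state `ρ` on `ℂ^d ⊗ ℂ^n`
satisfies `‖((Ψ₀ − Ψ₁) ⊗ id_n)[ρ]‖_tr = (2/(d+1))·(1 + ‖ρ^{T_A}‖_tr)`; consequently
`‖((Ψ₀ − Ψ₁) ⊗ id_n)[ρ]‖_tr − 4/(d+1) = (4/(d+1))·N_T(ρ)` where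
`N_T(ρ) = (‖ρ^{T_A}‖_tr − 1)/2` is the negativity. -/
theorem transposition_channels_advantage_eq_negativity
    {d : ℕ} (hd : 1 ≤ d)
    (Ψ₀ Ψ₁ : Matrix (Fin d) (Fin d) ℂ →ₗ[ℂ] Matrix (Fin (d + 1)) (Fin (d + 1)) ℂ)
    (hΨ₀ : ∀ X : Matrix (Fin d) (Fin d) ℂ,
      Ψ₀ X = pad1 (((d : ℂ) + 1)⁻¹ • (X.trace • (1 : Matrix (Fin d) (Fin d) ℂ) + Xᵀ)) 0)
    (hΨ₁ : ∀ X : Matrix (Fin d) (Fin d) ℂ,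
      Ψ₁ X = pad1 (((d : ℂ) + 1)⁻¹ • (X.trace • (1 : Matrix (Fin d) (Fin d) ℂ) - Xᵀ))
        (2 * X.trace / ((d : ℂ) + 1))) :
    ∀ n : ℕ, 1 ≤ n → ∀ ρ : Matrix (Fin d × Fin n) (Fin d × Fin n) ℂ, IsState ρ →
      traceNorm (tensorId n (Ψ₀ - Ψ₁) ρ) =
        (2 / ((d : ℝ) + 1)) * (1 + traceNorm (ptransposeFst ρ)) ∧
      traceNorm (tensorId n (Ψ₀ - Ψ₁) ρ) - 4 / ((d : ℝ) + 1) =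
        (4 / ((d : ℝ) + 1)) * ((traceNorm (ptransposeFst ρ) - 1) / 2) :=
  transposition_channels_advantage_eq_negativity_general Ψ₀ Ψ₁ hΨ₀ hΨ₁

end ChannelDiscrimination
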